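/- Let {a_k}, {l_k} be sequences of nonnegative reals and {ξ_k} ⊆ [0, 1-ε] for some ε > 0, such that a_{k+1} + l_k² ≤ a_k + ξ_{k-1} l_{k-1}² for all k ≥ 1. Then Σ_{k≥1} l_k² < ∞; in particular l_k → 0, and the sequence {a_k + l_{k-1}²} is convergent (hence {a_k} converges since l_k → 0). -/
import Mathlib


open Filter

/-- Abstract sequence lemma: let `{a_k}, {l_k}` be nonnegative real sequences and
`{ξ_k} ⊆ [0, 1-ε]` with `ε > 0`, such that `a_{k+1} + l_k² ≤ a_k + ξ_{k-1} l_{k-1}²`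
for all `k ≥ 1`. Then `Σ l_k² < ∞`, `l_k → 0`, the sequence `{a_k + l_{k-1}²}`
converges, and hence `{a_k}` converges. -/
theorem stmt_10 (ε : ℝ) (hε : 0 < ε) (a l ξ : ℕ → ℝ)
    (ha : ∀ k, 0 ≤ a k) (hl : ∀ k, 0 ≤ l k)
    (hξ : ∀ k, 0 ≤ ξ k ∧ ξ k ≤ 1 - ε)
    (hrec : ∀ k ≥ 1, a (k + 1) + l k ^ 2 ≤ a k + ξ (k - 1) * l (k - 1) ^ 2) :
    (Summable fun k => l k ^ 2) ∧
    Tendsto l atTop (nhds 0) ∧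
    (∃ c : ℝ, Tendsto (fun k => a (k + 1) + l k ^ 2) atTop (nhds c)) ∧
    (∃ c : ℝ, Tendsto a atTop (nhds c)) := by
  set b : ℕ → ℝ := fun k => a (k + 1) + l k ^ 2 with hb
  have hsq : ∀ k, (0:ℝ) ≤ l k ^ 2 := fun k => sq_nonneg _
  have hb0 : ∀ k, 0 ≤ b k := fun k => add_nonneg (ha _) (hsq _)
  have key : ∀ k, b (k + 1) + ε * l k ^ 2 ≤ b k := by
    intro k
    have h1 := hrec (k + 1) (by omega)
    have h2 : ξ k * l k ^ 2 ≤ (1 - ε) * l k ^ 2 :=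
      mul_le_mul_of_nonneg_right (hξ k).2 (hsq k)
    simp only [Nat.add_sub_cancel] at h1
    have : a (k + 2) + l (k + 1) ^ 2 ≤ a (k + 1) + (1 - ε) * l k ^ 2 :=
      le_trans h1 (by linarith)
    simp only [hb]
    ring_nf
    ring_nf at this
    linarith
  have hmono : Antitone b := antitone_nat_of_succ_le fun k => by
    have := key k
    have := mul_nonneg hε.le (hsq k)
    linarith
  -- partial sums bounded
  have hpart : ∀ n, b n ≤ b 0 - ∑ j ∈ Finset.range n, ε * l j ^ 2 := by
    intro n
    induction n with
    | zero => simp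
    | succ n ih =>
      rw [Finset.sum_range_succ]
      have := key n
      linarith
  have hsum_bdd : ∀ n, ∑ j ∈ Finset.range n, ε * l j ^ 2 ≤ b 0 := by
    intro n
    have := hpart n
    have := hb0 n
    linarith
  have hsummable : Summable fun k => l k ^ 2 := by
    have h1 : Summable fun k => ε * l k ^ 2 := by
      apply summable_of_sum_range_le (fun k => mul_nonneg hε.le (hsq k)) hsum_bdd
    have := h1.mul_left ε⁻¹
    simpa [← mul_assoc, inv_mul_cancel₀ hε.ne'] using this
  have hl2 : Tendsto (fun k => l k ^ 2) atTop (nhds 0) := hsummable.tendsto_atTop_zero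
  have hltend : Tendsto l atTop (nhds 0) := by
    have h := (Real.continuous_sqrt.tendsto 0).comp hl2
    rw [Real.sqrt_zero] at h
    exact h.congr fun k => Real.sqrt_sq (hl k)
  have hbconv : ∃ c, Tendsto b atTop (nhds c) := by
    have : BddBelow (Set.range b) := ⟨0, fun x ⟨k, hk⟩ => hk ▸ hb0 k⟩
    exact ⟨_, tendsto_atTop_ciInf hmono this⟩
  obtain ⟨c, hc⟩ := hbconv
  refine ⟨hsummable, hltend, ⟨c, hc⟩, ⟨c, ?_⟩⟩
  have ha1 : Tendsto (fun k => a (k + 1)) atTop (nhds c) := by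
    have : Tendsto (fun k => b k - l k ^ 2) atTop (nhds (c - 0)) := hc.sub hl2
    simpa [hb] using this
  exact (tendsto_add_atTop_iff_nat 1).mp ha1
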